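/- The rank of the controllability matrix [B, AB, ..., A^{N-1}B] equals N if and only if there is no nonzero vector v ∈ ℝ^N with vᵀA = λvᵀ for some λ and vᵀB = 0 (the PBH eigenvector test, stated over an algebraically closed field ℂ). -/

import Mathlib

/-!
The rank of the controllability matrix is full iff its left kernel is trivial. By Cayley–Hamilton
every power `A ^ k` is a combination of `A ^ i` with `i < N`, so that left kernel is the space `W`
of all `v` with `v A^k B = 0` for every `k`. This space is invariant under `v ↦ v A`; if it is
nonzero, `v ↦ v A` has an eigenvector in it over `ℂ`, which is a left eigenvector of `A`
annihilating `B` (take `k = 0`). Conversely a left eigenvector `v` with `v B = 0` satisfies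
`v A^k B = λ^k v B = 0`, so it lies in `W`.
-/

open Matrix Polynomial

theorem Matrix.pow_mem_span_pow_lt {n R : Type*} [CommRing R] [Fintype n] [DecidableEq n]
    (A : Matrix n n R) {N : ℕ} (hN : Fintype.card n ≤ N) (k : ℕ) :
    A ^ k ∈ Submodule.span R (Set.range fun i : Fin N => A ^ (i : ℕ)) := by
  nontriviality R
  have hdeg : (X ^ k %ₘ A.charpoly).degree < N := by
    refine (degree_modByMonic_lt _ A.charpoly_monic).trans_le ?_
    rw [charpoly_degree_eq_dim]
    exact_mod_cast hN
  rw [pow_eq_aeval_mod_charpoly, aeval_eq_sum_range]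
  refine Submodule.sum_mem _ fun i _ => ?_
  by_cases hi : i < N
  · exact Submodule.smul_mem _ _ (Submodule.subset_span ⟨⟨i, hi⟩, rfl⟩)
  · rw [coeff_eq_zero_of_degree_lt (hdeg.trans_le (by exact_mod_cast not_lt.mp hi)), zero_smul]
    exact zero_mem _

theorem Matrix.rank_eq_card_iff_forall_vecMul_eq_zero {m n K : Type*} [Field K] [Fintype m]
    [Fintype n] (A : Matrix m n K) :
    A.rank = Fintype.card m ↔ ∀ v : m → K, v ᵥ* A = 0 → v = 0 :=
  calc A.rank = Fintype.card m ↔ LinearIndependent K A.row := by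
        rw [linearIndependent_iff_card_eq_finrank_span, Set.finrank, ← rank_eq_finrank_span_row,
          eq_comm]
    _ ↔ Function.Injective A.vecMulLinear := vecMul_injective_iff.symm
    _ ↔ _ := injective_iff_map_eq_zero _

theorem Module.End.exists_hasEigenvector_of_mem_invtSubmodule {K V : Type*} [Field K]
    [IsAlgClosed K] [AddCommGroup V] [Module K V] [FiniteDimensional K V] {f : Module.End K V}
    {W : Submodule K V} (hW : W ∈ f.invtSubmodule) (hW₀ : W ≠ ⊥) :
    ∃ μ, ∃ v ∈ W, f.HasEigenvector μ v := by
  have : Nontrivial W := Submodule.nontrivial_iff_ne_bot.mpr hW₀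
  obtain ⟨μ, hμ⟩ := Module.End.exists_eigenvalue (f.restrict hW)
  obtain ⟨⟨v, hvW⟩, hv⟩ := hμ.exists_hasEigenvector
  refine ⟨μ, v, hvW, hasEigenvector_iff.mpr ⟨mem_eigenspace_iff.mpr ?_, ?_⟩⟩
  · exact congrArg Subtype.val hv.apply_eq_smul
  · exact fun h => hv.2 (Subtype.ext h)

section Controllability

variable {n m R : Type*} [Fintype n] [DecidableEq n]

def controllabilityMatrix [Semiring R] (A : Matrix n n R) (B : Matrix n m R) (N : ℕ) :
    Matrix n (Fin N × m) R :=
  of fun i p => (A ^ (p.1 : ℕ) * B) i p.2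

theorem vecMul_controllabilityMatrix_eq_zero_iff [Semiring R] {A : Matrix n n R}
    {B : Matrix n m R} {N : ℕ} {v : n → R} :
    v ᵥ* controllabilityMatrix A B N = 0 ↔ ∀ i : Fin N, v ᵥ* (A ^ (i : ℕ) * B) = 0 := by
  simp only [funext_iff, Prod.forall, Pi.zero_apply]
  rfl

def reachableAnnihilator [CommRing R] (A : Matrix n n R) (B : Matrix n m R) :
    Submodule R (n → R) :=
  ⨅ k : ℕ, LinearMap.ker (A ^ k * B).vecMulLinear

variable [CommRing R] {A : Matrix n n R} {B : Matrix n m R} {v : n → R}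

theorem mem_reachableAnnihilator :
    v ∈ reachableAnnihilator A B ↔ ∀ k : ℕ, v ᵥ* (A ^ k * B) = 0 := by
  simp [reachableAnnihilator]

theorem reachableAnnihilator_mem_invtSubmodule :
    reachableAnnihilator A B ∈ Module.End.invtSubmodule A.vecMulLinear := by
  refine (Module.End.mem_invtSubmodule_iff_forall_mem_of_mem _).mpr fun w hw => ?_
  rw [mem_reachableAnnihilator] at hw ⊢
  intro k
  rw [vecMulLinear_apply, vecMul_vecMul, ← Matrix.mul_assoc, ← pow_succ']
  exact hw (k + 1)

theorem mem_reachableAnnihilator_iff_vecMul_controllabilityMatrix {N : ℕ}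
    (hN : Fintype.card n ≤ N) :
    v ∈ reachableAnnihilator A B ↔ v ᵥ* controllabilityMatrix A B N = 0 := by
  rw [mem_reachableAnnihilator, vecMul_controllabilityMatrix_eq_zero_iff]
  refine ⟨fun h i => h i, fun h k => ?_⟩
  have hspan : Submodule.span R (Set.range fun i : Fin N => A ^ (i : ℕ)) ≤
      LinearMap.ker (B.vecMulLinear.comp (vecMulBilin R R v)) :=
    Submodule.span_le.mpr <| by rintro _ ⟨i, rfl⟩; simpa [vecMul_vecMul] using h i
  simpa [vecMul_vecMul] using hspan (A.pow_mem_span_pow_lt hN k)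

theorem mem_reachableAnnihilator_of_vecMul_eq_smul {μ : R} (hA : v ᵥ* A = μ • v)
    (hB : v ᵥ* B = 0) : v ∈ reachableAnnihilator A B := by
  have hpow : ∀ k : ℕ, v ᵥ* A ^ k = μ ^ k • v := by
    intro k
    induction k with
    | zero => simp
    | succ k ih => rw [pow_succ, ← vecMul_vecMul, ih, smul_vecMul, hA, smul_smul, pow_succ]
  refine mem_reachableAnnihilator.mpr fun k => ?_
  rw [← vecMul_vecMul, hpow, smul_vecMul, hB, smul_zero]

theorem rank_controllabilityMatrix_eq_card_iff {K : Type*} [Field K] [Fintype m]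
    (A : Matrix n n K) (B : Matrix n m K) {N : ℕ} (hN : Fintype.card n ≤ N) :
    (controllabilityMatrix A B N).rank = Fintype.card n ↔ reachableAnnihilator A B = ⊥ := by
  simp only [rank_eq_card_iff_forall_vecMul_eq_zero, Submodule.eq_bot_iff,
    mem_reachableAnnihilator_iff_vecMul_controllabilityMatrix hN]

theorem reachableAnnihilator_eq_bot_iff {K : Type*} [Field K] [IsAlgClosed K]
    (A : Matrix n n K) (B : Matrix n m K) :
    reachableAnnihilator A B = ⊥ ↔
      ∀ v : n → K, v ≠ 0 → ∀ μ : K, v ᵥ* A = μ • v → v ᵥ* B ≠ 0 := by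
  refine ⟨fun h v hv μ hA hB => hv ?_, fun h => by_contra fun hne => ?_⟩
  · exact (Submodule.eq_bot_iff _).mp h v (mem_reachableAnnihilator_of_vecMul_eq_smul hA hB)
  obtain ⟨μ, v, hvW, hv⟩ :=
    Module.End.exists_hasEigenvector_of_mem_invtSubmodule reachableAnnihilator_mem_invtSubmodule hne
  have hB : v ᵥ* B = 0 := by simpa using mem_reachableAnnihilator.mp hvW 0
  exact h v hv.2 μ hv.apply_eq_smul hB

end Controllability

/-- PBH eigenvector test over ℂ: the controllability matrix has full rank `N`
iff no nonzero left eigenvector `v` of `A` (i.e. `vᵀA = λvᵀ`) satisfies `vᵀB = 0`. -/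
theorem pbh_test (N M : ℕ)
    (A : Matrix (Fin N) (Fin N) ℂ) (B : Matrix (Fin N) (Fin M) ℂ) :
    (Matrix.of fun (i : Fin N) (p : Fin N × Fin M) =>
        (A ^ (p.1 : ℕ) * B) i p.2).rank = N ↔
    ∀ v : Fin N → ℂ, v ≠ 0 → ∀ μ : ℂ, A.vecMul v = μ • v → B.vecMul v ≠ 0 := by
  have h := (rank_controllabilityMatrix_eq_card_iff A B (Fintype.card_fin N).le).trans
    (reachableAnnihilator_eq_bot_iff A B)
  rwa [Fintype.card_fin] at h
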